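/- arXiv:1502.06280 — 6 statements merged into one kernel-verified Lean document; each statement's English description precedes it below -/
import Mathlib

section
/- The function u₁(ρ) = 80ρ²/(5+3ρ²)² satisfies -(1-ρ²)(u₁''(ρ) + (2/ρ)u₁'(ρ)) + 2ρ u₁'(ρ) + 2 u₁(ρ) + (V(ρ)/ρ²) u₁(ρ) = 0 for all ρ > 0, where V(ρ) = 6(25 - 90ρ² + 33ρ⁴)/(5+3ρ²)². That is, λ = 1 is an eigenvalue of the linearized spectral problem with eigenfunction u₁. -/
theorem HasDerivAt.div_pow {p q : ℝ → ℝ} {p' q' x : ℝ} (hp : HasDerivAt p p' x)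
    (hq : HasDerivAt q q' x) (hqx : q x ≠ 0) (n : ℕ) :
    HasDerivAt (fun y => p y / q y ^ n) ((p' * q x - n * p x * q') / q x ^ (n + 1)) x := by
  refine (hp.fun_div (hq.fun_pow n) (pow_ne_zero n hqx)).congr_deriv ?_
  rcases n with _ | n
  · simp [hqx]
  · simp only [add_tsub_cancel_right]
    field_simp
    push_cast
    ring

lemma hasDerivAt_five_add_three_mul_sq (x : ℝ) :
    HasDerivAt (fun y : ℝ => 5 + 3 * y ^ 2) (6 * x) x := by
  refine (((hasDerivAt_pow 2 x).const_mul 3).const_add 5).congr_deriv ?_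
  ring

lemma five_add_three_mul_sq_ne_zero (x : ℝ) : 5 + 3 * x ^ 2 ≠ 0 := by positivity

lemma deriv_eigenfunction :
    deriv (fun ρ : ℝ => 80 * ρ ^ 2 / (5 + 3 * ρ ^ 2) ^ 2)
      = fun ρ => (800 * ρ - 480 * ρ ^ 3) / (5 + 3 * ρ ^ 2) ^ 3 := by
  funext x
  have hnum : HasDerivAt (fun y : ℝ => 80 * y ^ 2) (160 * x) x := by
    refine ((hasDerivAt_pow 2 x).const_mul 80).congr_deriv ?_
    ring
  convert ((hnum.div_pow (hasDerivAt_five_add_three_mul_sq x)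
    (five_add_three_mul_sq_ne_zero x) 2).deriv) using 1
  field_simp
  ring

lemma deriv_deriv_eigenfunction (x : ℝ) :
    deriv (fun ρ : ℝ => (800 * ρ - 480 * ρ ^ 3) / (5 + 3 * ρ ^ 2) ^ 3) x
      = (4000 - 19200 * x ^ 2 + 4320 * x ^ 4) / (5 + 3 * x ^ 2) ^ 4 := by
  have hnum : HasDerivAt (fun y : ℝ => 800 * y - 480 * y ^ 3) (800 - 1440 * x ^ 2) x := by
    refine (((hasDerivAt_id x).const_mul 800).sub
      ((hasDerivAt_pow 3 x).const_mul 480)).congr_deriv ?_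
    ring
  rw [(hnum.div_pow (hasDerivAt_five_add_three_mul_sq x)
    (five_add_three_mul_sq_ne_zero x) 3).deriv]
  field_simp
  ring

/-- `u₁(ρ) = 80ρ²/(5+3ρ²)²` is an eigenfunction of the linearized spectral problem with
eigenvalue `λ = 1`:  `-(1-ρ²)(u₁'' + (2/ρ)u₁') + 2ρ u₁' + 2 u₁ + (V/ρ²) u₁ = 0` for `ρ > 0`,
where `V(ρ) = 6(25 - 90ρ² + 33ρ⁴)/(5+3ρ²)²`. -/
theorem stmt_1 (u₁ V : ℝ → ℝ)
    (hu : ∀ ρ : ℝ, u₁ ρ = 80 * ρ ^ 2 / (5 + 3 * ρ ^ 2) ^ 2)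
    (hV : ∀ ρ : ℝ, V ρ = 6 * (25 - 90 * ρ ^ 2 + 33 * ρ ^ 4) / (5 + 3 * ρ ^ 2) ^ 2) :
    ∀ ρ : ℝ, 0 < ρ →
      -((1 - ρ ^ 2) * (deriv (deriv u₁) ρ + (2 / ρ) * deriv u₁ ρ))
        + 2 * ρ * deriv u₁ ρ + 2 * u₁ ρ + (V ρ / ρ ^ 2) * u₁ ρ = 0 := by
  intro ρ hρ
  obtain rfl : u₁ = fun ρ => 80 * ρ ^ 2 / (5 + 3 * ρ ^ 2) ^ 2 := funext hu
  rw [deriv_eigenfunction, deriv_deriv_eigenfunction, hV]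
  field_simp
  ring
end

section
/- The function v₁(ρ) = 80ρ³(1-ρ²)^{1/2}/(5+3ρ²)² satisfies v₁''(ρ) = V₁(ρ) v₁(ρ) for all ρ ∈ (0,1), where V₁(ρ) = V(ρ)/(ρ²(1-ρ²)) - 1/(1-ρ²)² and V(ρ) = 6(25 - 90ρ² + 33ρ⁴)/(5+3ρ²)². -/
/-!
Write `v₁ = p · √(1 - ρ²)` with `p(ρ) = 80ρ³/(5 + 3ρ²)²` rational. Since
`(f · √(1 - ρ²))' = (f' - ρ f / (1 - ρ²)) · √(1 - ρ²)`, both derivatives of `v₁` are rational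
multiples of `√(1 - ρ²)`, and `v₁'' = V₁ v₁` becomes an identity of rational functions.
-/

open Real Set Filter Topology

lemma hasDerivAt_sqrt_one_sub_sq {x : ℝ} (hx : x ^ 2 < 1) :
    HasDerivAt (fun y => √(1 - y ^ 2)) (-x / √(1 - x ^ 2)) x := by
  have hinner : HasDerivAt (fun y : ℝ => 1 - y ^ 2) (-(2 * x)) x := by
    simpa using (hasDerivAt_pow 2 x).const_sub 1
  refine ((hasDerivAt_sqrt (by linarith)).comp x hinner).congr_deriv ?_
  field_simp

/-- The factor `√(1 - x²)` survives differentiation since `1 / √(1 - x²) = √(1 - x²) / (1 - x²)`. -/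
lemma HasDerivAt.mul_sqrt_one_sub_sq {f : ℝ → ℝ} {f' x : ℝ} (hf : HasDerivAt f f' x)
    (hx : x ^ 2 < 1) :
    HasDerivAt (fun y => f y * √(1 - y ^ 2)) ((f' - x * f x / (1 - x ^ 2)) * √(1 - x ^ 2)) x := by
  refine (hf.mul (hasDerivAt_sqrt_one_sub_sq hx)).congr_deriv ?_
  have hpos : 0 < 1 - x ^ 2 := by linarith
  have hs : √(1 - x ^ 2) ^ 2 = 1 - x ^ 2 := sq_sqrt hpos.le
  field_simp
  rw [hs]
  ring

lemma hasDerivAt_profile (x : ℝ) :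
    HasDerivAt (fun y => 80 * y ^ 3 / (5 + 3 * y ^ 2) ^ 2)
      (240 * x ^ 2 * (5 - x ^ 2) / (5 + 3 * x ^ 2) ^ 3) x := by
  have hnum := (hasDerivAt_pow 3 x).const_mul 80
  have hden := (((hasDerivAt_pow 2 x).const_mul 3).const_add 5).fun_pow 2
  refine (hnum.div hden (by positivity)).congr_deriv ?_
  field_simp
  ring

lemma hasDerivAt_profile_mul_sqrt {x : ℝ} (hx : x ^ 2 < 1) :
    HasDerivAt (fun y => 80 * y ^ 3 / (5 + 3 * y ^ 2) ^ 2 * √(1 - y ^ 2))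
      (80 * x ^ 2 * (15 - 23 * x ^ 2) / ((5 + 3 * x ^ 2) ^ 3 * (1 - x ^ 2)) * √(1 - x ^ 2)) x := by
  refine ((hasDerivAt_profile x).mul_sqrt_one_sub_sq hx).congr_deriv ?_
  have h : 1 - x ^ 2 ≠ 0 := by linarith
  field_simp
  ring

lemma hasDerivAt_slope {x : ℝ} (hx : x ^ 2 ≠ 1) :
    HasDerivAt (fun y => 80 * y ^ 2 * (15 - 23 * y ^ 2) / ((5 + 3 * y ^ 2) ^ 3 * (1 - y ^ 2)))
      (160 * x * (75 - 320 * x ^ 2 + 319 * x ^ 4 - 138 * x ^ 6)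
        / ((5 + 3 * x ^ 2) ^ 4 * (1 - x ^ 2) ^ 2)) x := by
  have hnum := ((hasDerivAt_pow 2 x).const_mul 80).fun_mul
    (((hasDerivAt_pow 2 x).const_mul 23).const_sub 15)
  have hden := ((((hasDerivAt_pow 2 x).const_mul 3).const_add 5).fun_pow 3).fun_mul
    ((hasDerivAt_pow 2 x).const_sub 1)
  have h : 1 - x ^ 2 ≠ 0 := sub_ne_zero.mpr (Ne.symm hx)
  refine (hnum.div hden (mul_ne_zero (by positivity) h)).congr_deriv ?_
  field_simp
  ring

lemma hasDerivAt_slope_mul_sqrt {x : ℝ} (hx₀ : x ≠ 0) (hx : x ^ 2 < 1) :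
    HasDerivAt (fun y => 80 * y ^ 2 * (15 - 23 * y ^ 2) / ((5 + 3 * y ^ 2) ^ 3 * (1 - y ^ 2)) * √(1 - y ^ 2))
      ((6 * (25 - 90 * x ^ 2 + 33 * x ^ 4) / (5 + 3 * x ^ 2) ^ 2 / (x ^ 2 * (1 - x ^ 2))
          - 1 / (1 - x ^ 2) ^ 2) * (80 * x ^ 3 / (5 + 3 * x ^ 2) ^ 2 * √(1 - x ^ 2))) x := by
  refine ((hasDerivAt_slope hx.ne).mul_sqrt_one_sub_sq hx).congr_deriv ?_
  have h : 1 - x ^ 2 ≠ 0 := by linarith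
  field_simp
  ring

/-- `v₁(ρ) = 80ρ³√(1-ρ²)/(5+3ρ²)²` satisfies `v₁'' = V₁ v₁` on `(0,1)`, where
`V₁(ρ) = V(ρ)/(ρ²(1-ρ²)) - 1/(1-ρ²)²` and `V(ρ) = 6(25 - 90ρ² + 33ρ⁴)/(5+3ρ²)²`. -/
theorem stmt_4 (v₁ V V₁ : ℝ → ℝ)
    (hv : ∀ ρ : ℝ, v₁ ρ = 80 * ρ ^ 3 * Real.sqrt (1 - ρ ^ 2) / (5 + 3 * ρ ^ 2) ^ 2)
    (hV : ∀ ρ : ℝ, V ρ = 6 * (25 - 90 * ρ ^ 2 + 33 * ρ ^ 4) / (5 + 3 * ρ ^ 2) ^ 2)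
    (hV₁ : ∀ ρ : ℝ, V₁ ρ = V ρ / (ρ ^ 2 * (1 - ρ ^ 2)) - 1 / (1 - ρ ^ 2) ^ 2) :
    ∀ ρ ∈ Set.Ioo (0 : ℝ) 1, deriv (deriv v₁) ρ = V₁ ρ * v₁ ρ := by
  intro ρ hρ
  have hsq : ∀ x ∈ Ioo (0 : ℝ) 1, x ^ 2 < 1 := fun x hx => by nlinarith [hx.1, hx.2]
  have hv₁ : v₁ = fun x => 80 * x ^ 3 / (5 + 3 * x ^ 2) ^ 2 * √(1 - x ^ 2) := by
    funext x
    rw [hv]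
    ring
  have hderiv : deriv v₁ =ᶠ[𝓝 ρ]
      fun x => 80 * x ^ 2 * (15 - 23 * x ^ 2) / ((5 + 3 * x ^ 2) ^ 3 * (1 - x ^ 2)) * √(1 - x ^ 2) := by
    filter_upwards [isOpen_Ioo.mem_nhds hρ] with x hx
    rw [hv₁]
    exact (hasDerivAt_profile_mul_sqrt (hsq x hx)).deriv
  rw [hderiv.deriv_eq, (hasDerivAt_slope_mul_sqrt hρ.1.ne' (hsq ρ hρ)).deriv, hV₁, hV, hv]
  ring
end

section
/- Let (aₙ) be any solution of the recurrence p₃(n)a_{n+3} + p₂(n)a_{n+2} + p₁(n)a_{n+1} + p₀(n)aₙ = 0 (with pᵢ as above, depending on λ ∈ ℂ), and define bₙ = a_{n+1} + (3/5)aₙ. Then (bₙ) satisfies q₂(n)b_{n+2} + q₁(n)b_{n+1} + q₀(n)bₙ = 0 for all n ≥ 0, where q₂(n) = -20n² - 190n - 390, q₁(n) = 8n² + (20λ+84)n + 5λ² + 75λ + 160, q₀(n) = 12n² + (12λ+42)n + 3λ² + 21λ + 30. -/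
/-!
The operator `∑ pᵢ(n) Sⁱ` (with `S` the shift `aₙ ↦ aₙ₊₁`) factors as `5 · (∑ qᵢ(n) Sⁱ) ∘ (S + 3/5)`,
the right factor being the one that annihilates the known solution `(-3/5)ⁿ`. Applying the
factorization to `a` gives the recurrence for `b = (S + 3/5) a`.
-/

theorem second_order_comp_shift_add {R : Type*} [CommRing R] (c q₀ q₁ q₂ : R) (a b : ℕ → R)
    (hb : ∀ n, b n = a (n + 1) + c * a n) (n : ℕ) :
    q₂ * b (n + 2) + q₁ * b (n + 1) + q₀ * b n
      = q₂ * a (n + 3) + (q₁ + c * q₂) * a (n + 2) + (q₀ + c * q₁) * a (n + 1)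
        + c * q₀ * a n := by
  rw [hb, hb, hb]
  ring

/-- Order reduction: if `(aₙ)` solves the four-term recurrence with coefficients `pᵢ`, then
`bₙ = a_{n+1} + (3/5)aₙ` solves the three-term recurrence with coefficients `qᵢ`. -/
theorem stmt_8 (Λ : ℂ) (a b : ℕ → ℂ)
    (ha : ∀ n : ℕ,
      (-100 * (n : ℂ) ^ 2 - 950 * n - 1950) * a (n + 3)
      + (-20 * (n : ℂ) ^ 2 + (100 * Λ - 150) * n + 25 * Λ ^ 2 + 375 * Λ - 370) * a (n + 2)
      + (84 * (n : ℂ) ^ 2 + (120 * Λ + 462) * n + 30 * Λ ^ 2 + 330 * Λ + 630) * a (n + 1)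
      + (36 * (n : ℂ) ^ 2 + (36 * Λ + 126) * n + 9 * Λ ^ 2 + 63 * Λ + 90) * a n = 0)
    (hb : ∀ n : ℕ, b n = a (n + 1) + (3/5 : ℂ) * a n) :
    ∀ n : ℕ,
      (-20 * (n : ℂ) ^ 2 - 190 * n - 390) * b (n + 2)
      + (8 * (n : ℂ) ^ 2 + (20 * Λ + 84) * n + 5 * Λ ^ 2 + 75 * Λ + 160) * b (n + 1)
      + (12 * (n : ℂ) ^ 2 + (12 * Λ + 42) * n + 3 * Λ ^ 2 + 21 * Λ + 30) * b n = 0 := by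
  intro n
  rw [second_order_comp_shift_add _ _ _ _ a b hb n]
  linear_combination (1 / 5 : ℂ) * ha n
end

section
/- The polynomial 25λ⁴ + 450λ³ + 2735λ² + 5070λ + 2016 is Hurwitz-stable: all of its complex roots have strictly negative real part. -/
/-!
Let `z = x + iy` be a root with `x ≥ 0`. If `y = 0`, then `x` is a nonnegative root of a
polynomial with positive coefficients, which is impossible. Otherwise the imaginary part of the
equation, divided by `y`, gives `y² (100x + 450)` as a cubic in `x`; substituting this into
`(100x + 450)²` times the real part eliminates `y` and leaves a sextic in `x` with positive
coefficients, which again cannot vanish at `x ≥ 0`.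
-/

namespace Complex

theorem re_quartic (a b c d e : ℝ) (z : ℂ) :
    ((a : ℂ) * z ^ 4 + b * z ^ 3 + c * z ^ 2 + d * z + e).re =
      a * (z.re ^ 4 - 6 * z.re ^ 2 * z.im ^ 2 + z.im ^ 4) + b * (z.re ^ 3 - 3 * z.re * z.im ^ 2)
        + c * (z.re ^ 2 - z.im ^ 2) + d * z.re + e := by
  simp only [add_re, mul_re, ofReal_re, ofReal_im, pow_succ, pow_zero, one_re, one_im, mul_im]
  ring

theorem im_quartic (a b c d e : ℝ) (z : ℂ) :
    ((a : ℂ) * z ^ 4 + b * z ^ 3 + c * z ^ 2 + d * z + e).im =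
      z.im * (4 * a * (z.re ^ 3 - z.re * z.im ^ 2) + b * (3 * z.re ^ 2 - z.im ^ 2)
        + 2 * c * z.re + d) := by
  simp only [add_im, mul_re, mul_im, ofReal_re, ofReal_im, pow_succ, pow_zero, one_re, one_im]
  ring

end Complex

theorem sextic_eq_zero_of_re_eq_zero_of_im_div_eq_zero {x y : ℝ}
    (hre : 25 * (x ^ 4 - 6 * x ^ 2 * y ^ 2 + y ^ 4) + 450 * (x ^ 3 - 3 * x * y ^ 2)
      + 2735 * (x ^ 2 - y ^ 2) + 5070 * x + 2016 = 0)
    (him : 100 * (x ^ 3 - x * y ^ 2) + 450 * (3 * x ^ 2 - y ^ 2) + 5470 * x + 5070 = 0) :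
    1000000 * x ^ 6 + 27000000 * x ^ 5 + 297700000 * x ^ 4 + 1713600000 * x ^ 3
      + 5386712500 * x ^ 2 + 8604112500 * x + 5189040000 = 0 := by
  have hy : y ^ 2 * (100 * x + 450) = 100 * x ^ 3 + 1350 * x ^ 2 + 5470 * x + 5070 := by
    linear_combination -him
  linear_combination (-(100 * x + 450) ^ 2) * hre
    + (25 * (y ^ 2 * (100 * x + 450) + (100 * x ^ 3 + 1350 * x ^ 2 + 5470 * x + 5070))
      - (150 * x ^ 2 + 1350 * x + 2735) * (100 * x + 450)) * hy

/-- The polynomial `25λ⁴ + 450λ³ + 2735λ² + 5070λ + 2016` is Hurwitz-stable: every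
complex root has strictly negative real part. -/
theorem stmt_13 :
    ∀ z : ℂ, 25 * z ^ 4 + 450 * z ^ 3 + 2735 * z ^ 2 + 5070 * z + 2016 = 0 → z.re < 0 := by
  intro z hz
  by_contra! hx
  have hre := Complex.re_quartic 25 450 2735 5070 2016 z
  have him := Complex.im_quartic 25 450 2735 5070 2016 z
  push_cast at hre him
  rw [hz, Complex.zero_re] at hre
  rw [hz, Complex.zero_im, eq_comm] at him
  rcases mul_eq_zero.mp him with hy | him
  · rw [hy] at hre
    have : 0 < 25 * z.re ^ 4 + 450 * z.re ^ 3 + 2735 * z.re ^ 2 + 5070 * z.re + 2016 := by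
      positivity
    linarith
  · have hsextic := sextic_eq_zero_of_re_eq_zero_of_im_div_eq_zero hre.symm (by linarith)
    have : 0 < 1000000 * z.re ^ 6 + 27000000 * z.re ^ 5 + 297700000 * z.re ^ 4
        + 1713600000 * z.re ^ 3 + 5386712500 * z.re ^ 2 + 8604112500 * z.re + 5189040000 := by
      positivity
    linarith
end

section
/- For every λ ∈ ℂ with Re λ ≥ 0, |δ₁(λ)| ≤ 1/4, where δ₁(λ) = [-5λ²(15λ³ - 20λ² - 939λ + 1412) - 36(1093λ - 256)] / [(5λ² + 78λ + 234)(25λ⁴ + 450λ³ + 2735λ² + 5070λ + 2016)]. -/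
/-!
Write `λ = x + iy` and `δ₁ = N / D`. Expanded as a polynomial in `x` and `y`,
`|D(λ)|² - 16 |N(λ)|²` has only nonnegative coefficients and only even powers of `y`, so it is
nonnegative for `x ≥ 0`; hence `|N| ≤ |D| / 4` on the closed right half-plane (its positive
constant term also shows that `D` has no zeros there).
-/

open Complex

def delta₁Num (Λ : ℂ) : ℂ :=
  -5 * Λ ^ 2 * (15 * Λ ^ 3 - 20 * Λ ^ 2 - 939 * Λ + 1412) - 36 * (1093 * Λ - 256)

def delta₁Den (Λ : ℂ) : ℂ :=
  (5 * Λ ^ 2 + 78 * Λ + 234) * (25 * Λ ^ 4 + 450 * Λ ^ 3 + 2735 * Λ ^ 2 + 5070 * Λ + 2016)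

theorem normSq_delta₁Den_sub_normSq_delta₁Num (x y : ℝ) :
    normSq (delta₁Den ⟨x, y⟩) - 16 * normSq (delta₁Num ⟨x, y⟩) =
      (221183447040 + 792036873360 * y ^ 2 + 213570061700 * y ^ 4 + 14796911500 * y ^ 6
          + 344413125 * y ^ 8 + 3893750 * y ^ 10 + 15625 * y ^ 12)
        + x * (1279301091840 + 1831248094320 * y ^ 2 + 299515535400 * y ^ 4
          + 12947802000 * y ^ 6 + 201105000 * y ^ 8 + 1050000 * y ^ 10)
        + x ^ 2 * (2769091048080 + 1875619721800 * y ^ 2 + 185470751500 * y ^ 4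
          + 5087992500 * y ^ 6 + 46781250 * y ^ 8 + 93750 * y ^ 10)
        + x ^ 3 * (3123873655920 + 1107004801200 * y ^ 2 + 67187298000 * y ^ 4
          + 1148400000 * y ^ 6 + 5250000 * y ^ 8)
        + x ^ 4 * (2074117986500 + 410426160500 * y ^ 2 + 15288558750 * y ^ 4
          + 148187500 * y ^ 6 + 234375 * y ^ 8)
        + x ^ 5 * (871245553800 + 100905702000 * y ^ 2 + 2238570000 * y ^ 4 + 10500000 * y ^ 6)
        + x ^ 6 * (243526272500 + 16690792500 * y ^ 2 + 202812500 * y ^ 4 + 312500 * y ^ 6)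
        + x ^ 7 * (46666206000 + 1836360000 * y ^ 2 + 10500000 * y ^ 4)
        + x ^ 8 * (6145813125 + 128718750 * y ^ 2 + 234375 * y ^ 4)
        + x ^ 9 * (545085000 + 5250000 * y ^ 2)
        + x ^ 10 * (31206250 + 93750 * y ^ 2)
        + 1050000 * x ^ 11 + 15625 * x ^ 12 := by
  simp only [delta₁Den, delta₁Num, normSq_apply, sub_re, sub_im, add_re, add_im, mul_re, mul_im,
    pow_succ, pow_zero, one_re, one_im, neg_re, neg_im, re_ofNat, im_ofNat]
  ring

theorem sixteen_mul_normSq_delta₁Num_le {Λ : ℂ} (hΛ : 0 ≤ Λ.re) :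
    16 * normSq (delta₁Num Λ) ≤ normSq (delta₁Den Λ) := by
  have h := normSq_delta₁Den_sub_normSq_delta₁Num Λ.re Λ.im
  rw [Complex.eta] at h
  have : 0 ≤ normSq (delta₁Den Λ) - 16 * normSq (delta₁Num Λ) := by
    rw [h]; positivity
  linarith

theorem four_mul_norm_delta₁Num_le {Λ : ℂ} (hΛ : 0 ≤ Λ.re) :
    4 * ‖delta₁Num Λ‖ ≤ ‖delta₁Den Λ‖ := by
  rw [← sq_le_sq₀ (by positivity) (norm_nonneg _), mul_pow, Complex.sq_norm, Complex.sq_norm]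
  linarith [sixteen_mul_normSq_delta₁Num_le hΛ]

/-- The initial relative error `δ₁` satisfies `|δ₁(λ)| ≤ 1/4` on the closed right
half-plane `{Re λ ≥ 0}`. -/
theorem stmt_15 :
    ∀ Λ : ℂ, 0 ≤ Λ.re →
      ‖((-5 * Λ ^ 2 * (15 * Λ ^ 3 - 20 * Λ ^ 2 - 939 * Λ + 1412)
          - 36 * (1093 * Λ - 256))
        / ((5 * Λ ^ 2 + 78 * Λ + 234)
          * (25 * Λ ^ 4 + 450 * Λ ^ 3 + 2735 * Λ ^ 2 + 5070 * Λ + 2016)))‖ ≤ 1/4 := by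
  intro Λ hΛ
  change ‖delta₁Num Λ / delta₁Den Λ‖ ≤ 1 / 4
  rw [norm_div]
  exact div_le_of_le_mul₀ (norm_nonneg _) (by norm_num)
    (by linarith [four_mul_norm_delta₁Num_le hΛ])
end

section
/- For every integer n ≥ 0 and every real t, |C_{n+1}(it)|² ≤ 9/25, where C_{n+1}(λ) = P₁(n,λ)/P₂(n,λ) with P₁(n,λ) = -3(n+5)(n+6)(4n²+39n+78)(4n²+47n+121)[λ² + (4n+11)λ + 4n² + 22n + 28] and P₂(n,λ) = 10(2n²+23n+60)[(n+5)λ² + (4n²+39n+78)(λ+n+3)][(n+6)λ² + (4n²+47n+121)(λ+n+4)]. -/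
/-!
On the imaginary axis every quadratic factor `p λ² + q λ + r` with real coefficients has
`|p (it)² + q (it) + r|² = (r - p t²)² + q² t²`, so `(9/25)|P₂(n,it)|² - |P₁(n,it)|²` is a
polynomial in `n` and `t`. Expanded, it has only nonnegative coefficients and even powers
of `t`, hence it is nonnegative for `n ≥ 0`.
-/

open Complex

lemma sq_norm_div_le_of_sq_norm_le {K : Type*} [NormedDivisionRing K] {a b : K} {c : ℝ}
    (hc : 0 ≤ c) (h : ‖a‖ ^ 2 ≤ c * ‖b‖ ^ 2) : ‖a / b‖ ^ 2 ≤ c := by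
  rcases eq_or_ne b 0 with rfl | hb
  · simpa using hc
  · rw [norm_div, div_pow, div_le_iff₀ (by positivity)]
    exact h

lemma Complex.normSq_quadratic_I_mul (p q r t : ℝ) :
    normSq ((p : ℂ) * (I * t) ^ 2 + q * (I * t) + r) = (r - p * t ^ 2) ^ 2 + (q * t) ^ 2 := by
  have h : (p : ℂ) * (I * t) ^ 2 + q * (I * t) + r =
      ((r - p * t ^ 2 : ℝ) : ℂ) + (q * t : ℝ) * I := by
    push_cast
    linear_combination (p : ℂ) * (t : ℂ) ^ 2 * I_sq
  rw [h, normSq_add_mul_I]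

lemma contraction_polynomial_le (n t : ℝ) (hn : 0 ≤ n) :
    ((n + 5) * (n + 6) * (4 * n ^ 2 + 39 * n + 78) * (4 * n ^ 2 + 47 * n + 121)) ^ 2
        * ((4 * n ^ 2 + 22 * n + 28 - t ^ 2) ^ 2 + ((4 * n + 11) * t) ^ 2)
      ≤ 4 * (2 * n ^ 2 + 23 * n + 60) ^ 2
        * (((4 * n ^ 2 + 39 * n + 78) * (n + 3) - (n + 5) * t ^ 2) ^ 2
            + ((4 * n ^ 2 + 39 * n + 78) * t) ^ 2)
        * (((4 * n ^ 2 + 47 * n + 121) * (n + 4) - (n + 6) * t ^ 2) ^ 2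
            + ((4 * n ^ 2 + 47 * n + 121) * t) ^ 2) := by
  rw [← sub_nonneg]
  ring_nf
  positivity

/-- On the imaginary axis, the contraction coefficient `C_{n+1}(λ) = P₁(n,λ)/P₂(n,λ)`
satisfies `|C_{n+1}(it)|² ≤ 9/25` for every integer `n ≥ 0` and every real `t`. -/
theorem stmt_16 (P₁ P₂ : ℕ → ℂ → ℂ)
    (hP₁ : ∀ (n : ℕ) (Λ : ℂ), P₁ n Λ =
      -3 * ((n : ℂ) + 5) * ((n : ℂ) + 6) * (4 * (n : ℂ) ^ 2 + 39 * n + 78)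
        * (4 * (n : ℂ) ^ 2 + 47 * n + 121)
        * (Λ ^ 2 + (4 * (n : ℂ) + 11) * Λ + 4 * (n : ℂ) ^ 2 + 22 * n + 28))
    (hP₂ : ∀ (n : ℕ) (Λ : ℂ), P₂ n Λ =
      10 * (2 * (n : ℂ) ^ 2 + 23 * n + 60)
        * (((n : ℂ) + 5) * Λ ^ 2 + (4 * (n : ℂ) ^ 2 + 39 * n + 78) * (Λ + (n : ℂ) + 3))
        * (((n : ℂ) + 6) * Λ ^ 2 + (4 * (n : ℂ) ^ 2 + 47 * n + 121) * (Λ + (n : ℂ) + 4))) :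
    ∀ (n : ℕ) (t : ℝ),
      ‖P₁ n (Complex.I * t) / P₂ n (Complex.I * t)‖ ^ 2 ≤ 9/25 := by
  intro n t
  set m : ℝ := (n : ℝ) with hm
  have hP₁' : P₁ n (I * t) =
      ((-3 * (m + 5) * (m + 6) * (4 * m ^ 2 + 39 * m + 78) * (4 * m ^ 2 + 47 * m + 121) : ℝ) : ℂ)
        * (((1 : ℝ) : ℂ) * (I * t) ^ 2 + ((4 * m + 11 : ℝ) : ℂ) * (I * t)
            + ((4 * m ^ 2 + 22 * m + 28 : ℝ) : ℂ)) := by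
    rw [hP₁, hm]; push_cast; ring
  have hP₂' : P₂ n (I * t) =
      ((10 * (2 * m ^ 2 + 23 * m + 60) : ℝ) : ℂ)
        * (((m + 5 : ℝ) : ℂ) * (I * t) ^ 2 + ((4 * m ^ 2 + 39 * m + 78 : ℝ) : ℂ) * (I * t)
            + (((4 * m ^ 2 + 39 * m + 78) * (m + 3) : ℝ) : ℂ))
        * (((m + 6 : ℝ) : ℂ) * (I * t) ^ 2 + ((4 * m ^ 2 + 47 * m + 121 : ℝ) : ℂ) * (I * t)
            + (((4 * m ^ 2 + 47 * m + 121) * (m + 4) : ℝ) : ℂ)) := by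
    rw [hP₂, hm]; push_cast; ring
  apply sq_norm_div_le_of_sq_norm_le (by norm_num)
  simp only [Complex.sq_norm, hP₁', hP₂', map_mul, normSq_ofReal, normSq_quadratic_I_mul]
  linear_combination 9 * contraction_polynomial_le m t (Nat.cast_nonneg n)
end
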